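/- Let (A, φ) be a Frobenius algebra, M and N simple left A-modules, and γ, μ ∈ A* functionals belonging to M and N respectively. Set γ* = φ⁻¹(γ), μ* = φ⁻¹(μ). If γ*·μ* ≠ 0 in A, then M ≅ N. -/

import Mathlib

/-!
Because `φ (a * b) = a • φ b` for the action `(a • γ) x = γ (x * a)`, we get `a * φ⁻¹ γ = 0`
whenever `a` annihilates `M` and `γ` belongs to `M`.

If `M ≇ N`, the annihilators of `M` and `N` are comaximal. Pick finite tuples `s`, `t` with
`ann s = Ann M` and `ann t = Ann N` (finite dimensionality). No simple module maps nontrivially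
to both `M` and `N`, so in the semisimple module `Mᵏ × Nˡ` every simple submodule lies in one of
the factors. Hence the cyclic submodule `A ∙ (s, t)` splits along them, and `(0, t) = u • (s, t)`
for some `u`, so `u ∈ Ann M` and `1 - u ∈ Ann N`. Writing `1 = u + v` this way gives
`φ⁻¹ γ * φ⁻¹ μ = (u * φ⁻¹ γ) * φ⁻¹ μ + (v * φ⁻¹ γ) * φ⁻¹ μ = 0`, since `v * φ⁻¹ γ ∈ Ann N`.
-/

open LinearMap

section Semisimple

variable {R X Y : Type*} [Ring R] [AddCommGroup X] [Module R X] [AddCommGroup Y] [Module R Y]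

instance IsSemisimpleModule.prod [IsSemisimpleModule R X] [IsSemisimpleModule R Y] :
    IsSemisimpleModule R (X × Y) :=
  have := IsSemisimpleModule.sup (.range (inl R X Y)) (.range (inr R X Y))
  .congr <| Submodule.topEquiv.symm.trans (.ofEq _ _ (sup_range_inl_inr (R := R)).symm)

theorem nonempty_linearEquiv_of_ne_zero_pi {S : Type*} [AddCommGroup S] [Module R S]
    [IsSimpleModule R S] [IsSimpleModule R X] {ι : Type*} {f : S →ₗ[R] ι → X} (hf : f ≠ 0) :
    Nonempty (S ≃ₗ[R] X) := by
  obtain ⟨i, hi⟩ : ∃ i, proj i ∘ₗ f ≠ 0 := by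
    by_contra! h
    exact hf (ext fun s => funext fun i => congr($(h i) s))
  exact ⟨.ofBijective _ (bijective_of_ne_zero hi)⟩

theorem mem_span_singleton_of_forall_simple_le_ker [IsSemisimpleModule R (X × Y)]
    (h : ∀ S : Submodule R (X × Y), IsSimpleModule R S →
      S ≤ ker (fst R X Y) ∨ S ≤ ker (snd R X Y)) (x : X) (y : Y) :
    ((0 : X), y) ∈ Submodule.span R {(x, y)} := by
  set C := Submodule.span R {(x, y)}
  have hC : C ≤ C ⊓ ker (snd R X Y) ⊔ C ⊓ ker (fst R X Y) := by
    refine (IsSemisimpleModule.sSup_simples_le C).ge.trans (sSup_le fun S ⟨hS, hSC⟩ => ?_)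
    rcases h S hS with hfst | hsnd
    · exact le_sup_of_le_right (le_inf hSC hfst)
    · exact le_sup_of_le_left (le_inf hSC hsnd)
  obtain ⟨p, ⟨-, hp⟩, q, ⟨hqC, hq⟩, hpq⟩ :=
    Submodule.mem_sup.mp (hC (Submodule.mem_span_singleton_self (x, y)))
  have hq' : q = (0, y) := by
    ext
    · exact hq
    · have hp2 : p.2 = 0 := hp
      simpa [hp2] using congrArg Prod.snd hpq
  exact hq' ▸ hqC

end Semisimple

theorem exists_fin_smul_eq_zero_imp_mem_annihilator {K A : Type*} [CommSemiring K] [Semiring A]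
    [Algebra K A] [Module.Finite K A] (M : Type*) [AddCommMonoid M] [Module A M]
    [Module.Finite A M] :
    ∃ (k : ℕ) (s : Fin k → M), ∀ a : A, a • s = 0 → a ∈ Module.annihilator A M := by
  let := Module.compHom M (algebraMap K A)
  have : IsScalarTower K A M := .of_compHom K A M
  have := Module.Finite.trans (R := K) A M
  obtain ⟨k, s, hs⟩ := Module.Finite.exists_fin (R := K) (M := M)
  refine ⟨k, s, fun a ha => Module.mem_annihilator.mpr fun m => ?_⟩
  have hspan : Submodule.span K (Set.range s) ≤ ker (DistribSMul.toLinearMap K M a) :=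
    Submodule.span_le.mpr <| Set.range_subset_iff.mpr fun i => congrFun ha i
  exact hspan (hs ▸ Submodule.mem_top)

theorem annihilator_sup_annihilator_eq_top {K A : Type*} [CommSemiring K] [Ring A] [Algebra K A]
    [Module.Finite K A]
    (M : Type*) [AddCommGroup M] [Module A M] [IsSimpleModule A M]
    (N : Type*) [AddCommGroup N] [Module A N] [IsSimpleModule A N]
    (hMN : ¬Nonempty (M ≃ₗ[A] N)) :
    Module.annihilator A M ⊔ Module.annihilator A N = ⊤ := by
  obtain ⟨k, s, hs⟩ := exists_fin_smul_eq_zero_imp_mem_annihilator (K := K) (A := A) M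
  obtain ⟨l, t, ht⟩ := exists_fin_smul_eq_zero_imp_mem_annihilator (K := K) (A := A) N
  have hsplit : ((0 : Fin k → M), t) ∈ Submodule.span A {(s, t)} := by
    refine mem_span_singleton_of_forall_simple_le_ker (fun S _ => ?_) s t
    simp only [le_ker_iff_comp_subtype_eq_zero]
    by_contra! ⟨hM, hN⟩
    obtain ⟨eM⟩ := nonempty_linearEquiv_of_ne_zero_pi (X := M) hM
    obtain ⟨eN⟩ := nonempty_linearEquiv_of_ne_zero_pi (X := N) hN
    exact hMN ⟨eM.symm.trans eN⟩
  obtain ⟨u, hu⟩ := Submodule.mem_span_singleton.mp hsplit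
  refine (Ideal.eq_top_iff_one _).mpr <| Submodule.mem_sup.mpr
    ⟨u, hs u (congrArg Prod.fst hu), 1 - u, ht _ ?_, add_sub_cancel u 1⟩
  rw [sub_smul, one_smul, sub_eq_zero]
  exact (congrArg Prod.snd hu).symm

theorem mul_symm_eq_zero_of_mem_annihilator {K A : Type*} [CommSemiring K] [Semiring A]
    [Algebra K A] (φ : A ≃ₗ[K] Module.Dual K A) (hφ : ∀ a b x : A, φ (a * b) x = φ b (x * a))
    {M : Type*} [AddCommMonoid M] [Module A M] {γ : Module.Dual K A}
    (hγ : ∀ a : A, (∀ m : M, a • m = 0) → γ a = 0) {a : A} (ha : a ∈ Module.annihilator A M) :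
    a * φ.symm γ = 0 :=
  φ.injective <| LinearMap.ext fun x => by
    rw [hφ, φ.apply_symm_apply, map_zero, LinearMap.zero_apply]
    exact hγ _ fun m => by rw [mul_smul, Module.mem_annihilator.mp ha, smul_zero]

/-- Let `(A, φ)` be a Frobenius algebra, `M`, `N` simple left `A`-modules,
and `γ`, `μ` functionals belonging to `M`, `N` respectively.  If `φ⁻¹(γ)·φ⁻¹(μ) ≠ 0`
in `A`, then `M ≅ N`. -/
theorem frobenius_orthogonality_product
    {A : Type*} [Ring A] [Algebra ℂ A] [FiniteDimensional ℂ A]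
    (φ : A ≃ₗ[ℂ] Module.Dual ℂ A)
    (hφ : ∀ a b x : A, φ (a * b) x = φ b (x * a))
    (M : Type*) [AddCommGroup M] [Module A M] [IsSimpleModule A M]
    (N : Type*) [AddCommGroup N] [Module A N] [IsSimpleModule A N]
    (γ μ : Module.Dual ℂ A)
    (hγ : ∀ a : A, (∀ m : M, a • m = 0) → γ a = 0)
    (hμ : ∀ a : A, (∀ n : N, a • n = 0) → μ a = 0)
    (h : φ.symm γ * φ.symm μ ≠ 0) :
    Nonempty (M ≃ₗ[A] N) := by
  by_contra hMN
  obtain ⟨u, hu, v, hv, huv⟩ := Submodule.mem_sup.mp <|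
    (annihilator_sup_annihilator_eq_top (K := ℂ) M N hMN).symm ▸ Submodule.mem_top (x := (1 : A))
  have hvγ : v * φ.symm γ ∈ Module.annihilator A N := Module.mem_annihilator.mpr fun n => by
    rw [mul_smul, Module.mem_annihilator.mp hv]
  apply h
  calc φ.symm γ * φ.symm μ = u * φ.symm γ * φ.symm μ + v * φ.symm γ * φ.symm μ := by
        rw [← add_mul, ← add_mul, huv, one_mul]
    _ = 0 := by
        rw [mul_symm_eq_zero_of_mem_annihilator φ hφ hγ hu,
          mul_symm_eq_zero_of_mem_annihilator φ hφ hμ hvγ, zero_mul, add_zero]
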